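/- arXiv:2411.08296 — 3 statements merged into one kernel-verified Lean document; each statement's English description precedes it below -/
import Mathlib

section
/- Brahmagupta's arcsin formula follows from Bhāskara I's sine formula: if 0 ≤ s ≤ 90, r > 0, and m = r·s(180 - s) / ((1/4)(40500 - s(180 - s))), then s = 90 - √(8100 - 10125·m/(m/4 + r)). -/
/-! In terms of `p = s (180 - s)`, Bhāskara's formula `m = 4 r p / (40500 - p)` is a Möbius
transformation of `p`, and `10125 m / (m / 4 + r)` is its inverse. Hence the radicand is
`8100 - s (180 - s) = (90 - s) ^ 2`, and `90 - s ≥ 0` lets the square root cancel the square. -/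

theorem bhaskara_sine_inverse {r p : ℝ} (hr : r ≠ 0) (hp : p ≠ 40500) :
    10125 * (r * p / (1 / 4 * (40500 - p))) / (r * p / (1 / 4 * (40500 - p)) / 4 + r) = p := by
  have hD : 40500 - p ≠ 0 := sub_ne_zero.mpr hp.symm
  field_simp
  ring

theorem mul_one_eighty_sub_ne (s : ℝ) : s * (180 - s) ≠ 40500 := by
  nlinarith [sq_nonneg (90 - s)]

theorem stmt_5_general (s r m : ℝ) (hs90 : s ≤ 90) (hr : 0 < r)
    (hm : m = r * s * (180 - s) / ((1 / 4) * (40500 - s * (180 - s)))) :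
    s = 90 - Real.sqrt (8100 - 10125 * m / (m / 4 + r)) := by
  rw [hm, mul_assoc, bhaskara_sine_inverse hr.ne' (mul_one_eighty_sub_ne s),
    show 8100 - s * (180 - s) = (90 - s) ^ 2 by ring, Real.sqrt_sq (by linarith)]
  ring

theorem stmt_5 (s r m : ℝ) (hs0 : 0 ≤ s) (hs90 : s ≤ 90) (hr : 0 < r)
    (hm : m = r * s * (180 - s) / ((1 / 4) * (40500 - s * (180 - s)))) :
    s = 90 - Real.sqrt (8100 - 10125 * m / (m / 4 + r)) :=
  stmt_5_general s r m hs90 hr hm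
end

section
/- The cubic truncation of the arcsin series: for all x with |x| ≤ 1/2, |arcsin x - (x + x³/6)| ≤ |x|⁵. -/
open Real Set

lemma deriv_bound {t : ℝ} (ht : |t| ≤ 1/2) :
    |1 / Real.sqrt (1 - t^2) - (1 + t^2/2)| ≤ t^4 := by
  have h1 : t^2 ≤ 1/4 := by nlinarith [sq_abs t, abs_nonneg t]
  set s := Real.sqrt (1 - t^2) with hs
  have hs2 : s^2 = 1 - t^2 := Real.sq_sqrt (by linarith)
  have hspos : 0 < s := Real.sqrt_pos.mpr (by linarith)
  have A : s * (1 + t^2/2) ≤ 1 := by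
    nlinarith [sq_nonneg (s * (1 + t^2/2) - 1), sq_nonneg t, sq_nonneg (t^2), sq_nonneg (t^3)]
  have B : 1 ≤ s * (1 + t^2/2 + t^4) := by
    nlinarith [sq_nonneg (s * (1 + t^2/2 + t^4) - 1), sq_nonneg t, sq_nonneg (t^2), sq_nonneg (t^3), mul_pos hspos hspos]
  have hA : 1 + t^2/2 ≤ 1 / s := (le_div_iff₀ hspos).mpr (by linarith [A] : (1 + t ^ 2 / 2) * s ≤ 1)
  have hB : 1 / s ≤ 1 + t^2/2 + t^4 := (div_le_iff₀ hspos).mpr (by linarith [B] : 1 ≤ (1 + t ^ 2 / 2 + t ^ 4) * s)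
  rw [abs_le]
  constructor <;> nlinarith [sq_nonneg (t^2)]

theorem stmt_8 : ∀ x : ℝ, |x| ≤ 1 / 2 →
    |Real.arcsin x - (x + x ^ 3 / 6)| ≤ |x| ^ 5 := by
  intro x hx
  set g : ℝ → ℝ := fun t => Real.arcsin t - (t + t^3/6) with hg
  have hderiv : ∀ t ∈ uIcc (0:ℝ) x,
      HasDerivWithinAt g (1 / Real.sqrt (1 - t^2) - (1 + t^2/2)) (uIcc (0:ℝ) x) t := by
    intro t htmem
    have habs : |t| ≤ 1/2 := by
      rcases mem_uIcc.mp htmem with ⟨h1, h2⟩ | ⟨h1, h2⟩ <;>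
        rw [abs_le] <;> constructor <;> cases abs_le.mp hx <;> linarith
    have h1 : t ≠ 1 := by intro h; rw [h] at habs; norm_num at habs
    have h2 : t ≠ -1 := by intro h; rw [h, abs_neg] at habs; norm_num at habs
    have harc := Real.hasDerivAt_arcsin h2 h1
    have hpoly : HasDerivAt (fun t : ℝ => t + t^3/6) (1 + t^2/2) t := by
      have := (hasDerivAt_id t).add ((hasDerivAt_pow 3 t).div_const 6)
      refine this.congr_deriv ?_
      ring
    exact (harc.sub hpoly).hasDerivWithinAt
  have hbound : ∀ t ∈ uIcc (0:ℝ) x, ‖1 / Real.sqrt (1 - t^2) - (1 + t^2/2)‖ ≤ x^4 := by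
    intro t htmem
    have habs : |t| ≤ |x| := by
      rcases mem_uIcc.mp htmem with ⟨h1, h2⟩ | ⟨h1, h2⟩ <;>
        rw [abs_le] <;> constructor <;> linarith [neg_abs_le x, le_abs_self x]
    calc ‖1 / Real.sqrt (1 - t^2) - (1 + t^2/2)‖ ≤ t^4 := deriv_bound (habs.trans hx)
      _ ≤ x^4 := by
        have h4 : |t|^4 ≤ |x|^4 := pow_le_pow_left₀ (abs_nonneg t) habs 4
        rw [← abs_pow, abs_of_nonneg (by positivity : (0:ℝ) ≤ t^4)] at h4
        rw [← abs_pow, abs_of_nonneg (by positivity : (0:ℝ) ≤ x^4)] at h4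
        exact h4
  have key := (convex_uIcc (0:ℝ) x).norm_image_sub_le_of_norm_hasDerivWithin_le hderiv hbound
      left_mem_uIcc right_mem_uIcc
  have hg0 : g 0 = 0 := by simp [hg, Real.arcsin_zero]
  rw [hg0, sub_zero, sub_zero] at key
  have hx4 : x^4 = |x|^4 := by
    rw [← abs_pow, abs_of_nonneg (by positivity : (0:ℝ) ≤ x^4)]
  calc |Real.arcsin x - (x + x^3/6)| = ‖g x‖ := rfl
    _ ≤ x^4 * ‖x‖ := key
    _ = |x|^5 := by rw [hx4, Real.norm_eq_abs]; ring
end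

section
/- The sequence a_j = (3j)!/(j!·(2j+1)!) satisfies a₀ = 1, a₁ = 1, a₂ = 3, a₃ = 12, a₄ = 55, a₅ = 273, a₆ = 1428, and each a_j is a positive integer. -/
/-! Writing `(3j)! = C(3j, j) · j! · (2j)!`, integrality amounts to `2j + 1 ∣ C(3j, j)`. This is the
Fuss–Catalan divisibility: `(3j + 1) · C(3j, j) = C(3j + 1, j) · (2j + 1)` and `2j + 1` is coprime
to `3j + 1`. -/

def a (j : ℕ) : ℕ := (3 * j).factorial / (j.factorial * (2 * j + 1).factorial)

namespace Nat

theorem sub_add_one_dvd_choose_of_coprime {n k : ℕ} (h : Coprime (n + 1 - k) (n + 1)) :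
    n + 1 - k ∣ n.choose k :=
  h.dvd_of_dvd_mul_right ⟨(n + 1).choose k, by rw [choose_mul_succ_eq, mul_comm]⟩

theorem mul_add_one_dvd_choose_add_one_mul (m k : ℕ) : m * k + 1 ∣ ((m + 1) * k).choose k := by
  have hsub : (m + 1) * k + 1 - k = m * k + 1 := by rw [add_one_mul]; omega
  have hcop : Coprime (m * k + 1) ((m + 1) * k + 1) := by
    rw [show (m + 1) * k + 1 = k + 1 * (m * k + 1) by ring, coprime_add_mul_right_right,
      coprime_comm, add_comm, coprime_add_mul_right_right]
    exact coprime_one_right k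
  exact hsub ▸ sub_add_one_dvd_choose_of_coprime (hsub ▸ hcop)

theorem factorial_mul_factorial_mul_add_one_dvd (m k : ℕ) :
    k ! * (m * k + 1)! ∣ ((m + 1) * k)! := by
  obtain ⟨c, hc⟩ := mul_add_one_dvd_choose_add_one_mul m k
  refine ⟨c, ?_⟩
  have hsub : (m + 1) * k - k = m * k := by rw [add_one_mul]; omega
  rw [← choose_mul_factorial_mul_factorial (show k ≤ (m + 1) * k by nlinarith), hsub, hc,
    factorial_succ]
  ring

end Nat

theorem stmt_12 :
    a 0 = 1 ∧ a 1 = 1 ∧ a 2 = 3 ∧ a 3 = 12 ∧ a 4 = 55 ∧ a 5 = 273 ∧ a 6 = 1428 ∧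
      (∀ j, j.factorial * (2 * j + 1).factorial ∣ (3 * j).factorial) ∧
      (∀ j, 0 < a j) := by
  have hdvd (j : ℕ) : j.factorial * (2 * j + 1).factorial ∣ (3 * j).factorial :=
    Nat.factorial_mul_factorial_mul_add_one_dvd 2 j
  refine ⟨by decide, by decide, by decide, by decide, by decide, by decide, by decide, hdvd,
    fun j => ?_⟩
  exact Nat.div_pos (Nat.le_of_dvd (Nat.factorial_pos _) (hdvd j))
    (Nat.mul_pos (Nat.factorial_pos _) (Nat.factorial_pos _))
end
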